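/- Let $j^* \ge 2$ and $k^* = j^* + 1 \le 2n$. Define $p_j = j/2^j$ for $j < j^*$, $p_{j^*} = (j^*-1)/2^{j^*-1}$, $p_{k^*} = 1/2^{k^*-3}$, and $p_j = 0$ for $j > k^*$; define $q_j = (3j-1)/2^{j+2}$ for $j \le j^*-2$, $q_{j^*-1} = 4(j^*-1)/2^{j^*+1}$, $q_{j^*} = 4/2^{j^*+1}$, and $q_j = 0$ for $j > j^*$. Then for every $i$ with $1 \le i \le 2n$, $2\sum_{j=1}^i q_j \ge \sum_{j=1}^i p_j$. -/

import Mathlib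

/-!
Write `gap i` for `∑_{j ≤ i} (2 q_j - p_j)`. Below `j* - 1` the increments are `(j - 1) / 2^(j+1)`,
which telescope to `gap i = 1/2 - (i + 1) / 2^(i+1) ≥ 0`. The three increments at
`j* - 1, j*, j* + 1` are `(j* - 1)`, `3 - j*` and `-2`, all over `2^(j*-1)`: every partial sum of
them is nonnegative and the whole block sums to `0`, after which all increments vanish.
-/

open Finset

namespace PrefixDomination

def gap (p q : ℕ → ℝ) (i : ℕ) : ℝ := ∑ j ∈ Icc 1 i, (2 * q j - p j)

variable {p q : ℕ → ℝ}

@[simp]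
theorem gap_zero : gap p q 0 = 0 := by simp [gap]

theorem gap_succ (i : ℕ) : gap p q (i + 1) = gap p q i + (2 * q (i + 1) - p (i + 1)) :=
  sum_Icc_succ_top (by omega) _

theorem add_one_div_two_pow_succ_le_half (m : ℕ) : ((m : ℝ) + 1) / 2 ^ (m + 1) ≤ 1 / 2 := by
  have hm : (m : ℝ) + 1 ≤ 2 ^ m := by exact_mod_cast Nat.lt_two_pow_self
  rw [div_le_div_iff₀ (by positivity) (by norm_num), pow_succ]
  linarith

theorem gap_eq_of_le {m : ℕ}
    (hp : ∀ j, 1 ≤ j → j ≤ m → p j = (j : ℝ) / 2 ^ j)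
    (hq : ∀ j, 1 ≤ j → j ≤ m → q j = (3 * (j : ℝ) - 1) / 2 ^ (j + 2)) :
    gap p q m = 1 / 2 - ((m : ℝ) + 1) / 2 ^ (m + 1) := by
  induction m with
  | zero => simp
  | succ m ih =>
    rw [gap_succ, ih (fun j h1 h2 => hp j h1 (by omega)) (fun j h1 h2 => hq j h1 (by omega)),
      hp (m + 1) (by omega) le_rfl, hq (m + 1) (by omega) le_rfl]
    push_cast
    field_simp
    ring

theorem gap_eq_of_le_of_vanish {m i : ℕ} (hp : ∀ j, m < j → p j = 0) (hq : ∀ j, m < j → q j = 0)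
    (hmi : m ≤ i) : gap p q i = gap p q m := by
  induction i, hmi using Nat.le_induction with
  | base => rfl
  | succ i hmi ih => rw [gap_succ, ih, hp _ (by omega), hq _ (by omega)]; ring

theorem gap_nonneg {t : ℕ}
    (hp1 : ∀ j, 1 ≤ j → j < t + 2 → p j = (j : ℝ) / 2 ^ j)
    (hp2 : p (t + 2) = ((t : ℝ) + 1) / 2 ^ (t + 1))
    (hp3 : p (t + 3) = 1 / 2 ^ t)
    (hp4 : ∀ j, t + 3 < j → p j = 0)
    (hq1 : ∀ j, 1 ≤ j → j ≤ t → q j = (3 * (j : ℝ) - 1) / 2 ^ (j + 2))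
    (hq2 : q (t + 1) = 4 * ((t : ℝ) + 1) / 2 ^ (t + 3))
    (hq3 : q (t + 2) = 4 / 2 ^ (t + 3))
    (hq4 : ∀ j, t + 2 < j → q j = 0) (i : ℕ) :
    0 ≤ gap p q i := by
  have hle : ∀ m ≤ t, 0 ≤ gap p q m := fun m hm => by
    rw [gap_eq_of_le (fun j h1 h2 => hp1 j h1 (by omega)) (fun j h1 h2 => hq1 j h1 (by omega))]
    linarith [add_one_div_two_pow_succ_le_half m]
  have h1 : gap p q (t + 1) = gap p q t + ((t : ℝ) + 1) / 2 ^ (t + 1) := by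
    rw [gap_succ, hp1 (t + 1) (by omega) (by omega), hq2]
    push_cast
    field_simp
    ring
  have h2 : gap p q (t + 2) = gap p q t + 2 / 2 ^ (t + 1) := by
    rw [gap_succ, h1, hp2, hq3]
    field_simp
    ring
  have h3 : gap p q (t + 3) = gap p q t := by
    rw [gap_succ, h2, hp3, hq4 _ (by omega)]
    field_simp
    ring
  obtain hi | rfl | rfl | hi : i ≤ t ∨ i = t + 1 ∨ i = t + 2 ∨ t + 3 ≤ i := by omega
  · exact hle i hi
  · rw [h1]; exact add_nonneg (hle t le_rfl) (by positivity)
  · rw [h2]; exact add_nonneg (hle t le_rfl) (by positivity)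
  · rw [gap_eq_of_le_of_vanish hp4 (fun j hj => hq4 j (by omega)) hi, h3]
    exact hle t le_rfl

end PrefixDomination

open PrefixDomination in
theorem prefix_domination_case_kstar_eq_general (n js ks : ℕ) (p q : ℕ → ℝ)
    (hjs : 2 ≤ js) (hks : ks = js + 1)
    (hp1 : ∀ j, 1 ≤ j → j < js → p j = (j : ℝ) / 2 ^ j)
    (hp2 : p js = ((js : ℝ) - 1) / (2 : ℝ) ^ ((js : ℤ) - 1))
    (hp3 : p ks = 1 / (2 : ℝ) ^ ((ks : ℤ) - 3))
    (hp4 : ∀ j, ks < j → p j = 0)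
    (hq1 : ∀ j, 1 ≤ j → j ≤ js - 2 → q j = (3 * (j : ℝ) - 1) / 2 ^ (j + 2))
    (hq2 : q (js - 1) = 4 * ((js : ℝ) - 1) / 2 ^ (js + 1))
    (hq3 : q js = 4 / 2 ^ (js + 1))
    (hq4 : ∀ j, js < j → q j = 0) :
    ∀ i, 1 ≤ i → i ≤ 2 * n →
      ∑ j ∈ Finset.Icc 1 i, p j ≤ 2 * ∑ j ∈ Finset.Icc 1 i, q j := by
  obtain ⟨t, rfl⟩ : ∃ t, js = t + 2 := ⟨js - 2, by omega⟩
  subst hks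
  have hp2' : p (t + 2) = ((t : ℝ) + 1) / 2 ^ (t + 1) := by
    rw [hp2, show ((t + 2 : ℕ) : ℤ) - 1 = (t + 1 : ℕ) by omega, zpow_natCast]
    push_cast
    ring
  have hp3' : p (t + 3) = 1 / 2 ^ t := by
    rw [hp3, show ((t + 2 + 1 : ℕ) : ℤ) - 3 = (t : ℕ) by omega, zpow_natCast]
  have hq2' : q (t + 1) = 4 * ((t : ℝ) + 1) / 2 ^ (t + 3) := by
    rw [show t + 1 = t + 2 - 1 by omega, hq2]
    push_cast
    ring
  intro i _ _
  rw [← sub_nonneg, mul_sum, ← sum_sub_distrib]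
  exact gap_nonneg hp1 hp2' hp3' hp4 (by simpa using hq1) hq2' hq3 hq4 i

/-- Prefix-sum domination in the case `k* = j* + 1` of the rank-2 single-sample
prophet inequality analysis. -/
theorem prefix_domination_case_kstar_eq (n js ks : ℕ) (p q : ℕ → ℝ)
    (hjs : 2 ≤ js) (hks : ks = js + 1) (h2n : ks ≤ 2 * n)
    (hp1 : ∀ j, 1 ≤ j → j < js → p j = (j : ℝ) / 2 ^ j)
    (hp2 : p js = ((js : ℝ) - 1) / (2 : ℝ) ^ ((js : ℤ) - 1))
    (hp3 : p ks = 1 / (2 : ℝ) ^ ((ks : ℤ) - 3))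
    (hp4 : ∀ j, ks < j → p j = 0)
    (hq1 : ∀ j, 1 ≤ j → j ≤ js - 2 → q j = (3 * (j : ℝ) - 1) / 2 ^ (j + 2))
    (hq2 : q (js - 1) = 4 * ((js : ℝ) - 1) / 2 ^ (js + 1))
    (hq3 : q js = 4 / 2 ^ (js + 1))
    (hq4 : ∀ j, js < j → q j = 0) :
    ∀ i, 1 ≤ i → i ≤ 2 * n →
      ∑ j ∈ Finset.Icc 1 i, p j ≤ 2 * ∑ j ∈ Finset.Icc 1 i, q j :=
  prefix_domination_case_kstar_eq_general n js ks p q hjs hks hp1 hp2 hp3 hp4 hq1 hq2 hq3 hq4
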